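/- Let V be a set and π : E → X a surjection of sets all of whose fibers admit a bijection to V, and let P := {(x, φ) | x ∈ X, φ : V ≃ π⁻¹({x})} be the frame bundle with Equiv.Perm V acting by σ • (x, φ) = (x, φ ∘ σ⁻¹) and with Equiv.Perm V acting on V by evaluation σ • v = σ v. Then the map from the associated bundle P ×_{Perm V} V to E sending the class of ((x, φ), v) to φ v ∈ E is well defined and is a bijection commuting with the projections to X. -/
import Mathlib


/-- The frame bundle of a surjection `π : E → X` with typical fiber `V`: pairs of a
point `x : X` together with a bijection (frame) `φ : V ≃ π⁻¹({x})`. -/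
def FrameBundle (V : Type*) {E X : Type*} (π : E → X) : Type _ :=
  Σ x : X, V ≃ {e : E // π e = x}

/-- The permutation group `Equiv.Perm V` acts on frames by `σ • (x, φ) = (x, φ ∘ σ⁻¹)`. -/
instance FrameBundle.instSMul {V E X : Type*} {π : E → X} :
    SMul (Equiv.Perm V) (FrameBundle V π) :=
  ⟨fun σ p => ⟨p.1, ((σ⁻¹ : Equiv.Perm V) : V ≃ V).trans p.2⟩⟩

instance FrameBundle.instMulAction {V E X : Type*} {π : E → X} :
    MulAction (Equiv.Perm V) (FrameBundle V π) where
  one_smul := by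
    rintro ⟨x, φ⟩
    have h : (((1 : Equiv.Perm V)⁻¹ : Equiv.Perm V) : V ≃ V).trans φ = φ := by
      ext v; rfl
    exact congrArg (fun ψ : V ≃ {e : E // π e = x} => (⟨x, ψ⟩ : FrameBundle V π)) h
  mul_smul := by
    intro σ τ p
    rcases p with ⟨x, φ⟩
    have h : (((σ * τ : Equiv.Perm V)⁻¹ : Equiv.Perm V) : V ≃ V).trans φ =
        ((σ⁻¹ : Equiv.Perm V) : V ≃ V).trans
          (((τ⁻¹ : Equiv.Perm V) : V ≃ V).trans φ) := by
      ext v; rfl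
    exact congrArg (fun ψ : V ≃ {e : E // π e = x} => (⟨x, ψ⟩ : FrameBundle V π)) h

/-- The map from the associated bundle `FrameBundle ×_{Perm V} V` to `E`, sending the
class of `((x, φ), v)` to `φ v`.  It is well defined on `Perm V`-orbits. -/
def frameAssocMap {V E X : Type*} (π : E → X) :
    Quotient (MulAction.orbitRel (Equiv.Perm V) (FrameBundle V π × V)) → E :=
  Quotient.lift (fun pv : FrameBundle V π × V => (pv.1.2 pv.2 : {e : E // π e = pv.1.1}).1)
    (by
      intro a b hab
      have hab' : a ∈ MulAction.orbit (Equiv.Perm V) b := hab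
      obtain ⟨σ, hσ⟩ := MulAction.mem_orbit_iff.mp hab'
      rw [← hσ]
      show ((((σ⁻¹ : Equiv.Perm V) : V ≃ V).trans b.1.2) (σ • b.2) :
        {e : E // π e = b.1.1}).1 = (b.1.2 b.2 : {e : E // π e = b.1.1}).1
      simp [Equiv.Perm.smul_def])

/-- The projection from the associated bundle `FrameBundle ×_{Perm V} V` to `X`. -/
def frameAssocProj {V E X : Type*} (π : E → X) :
    Quotient (MulAction.orbitRel (Equiv.Perm V) (FrameBundle V π × V)) → X :=
  Quotient.lift (fun pv : FrameBundle V π × V => pv.1.1)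
    (by
      intro a b hab
      have hab' : a ∈ MulAction.orbit (Equiv.Perm V) b := hab
      obtain ⟨σ, hσ⟩ := MulAction.mem_orbit_iff.mp hab'
      rw [← hσ]
      rfl)

/-- For a surjection `π : E → X` all of whose fibers admit a
bijection to `V`, the canonical map from the bundle associated to the frame bundle
(along the evaluation action of `Perm V` on `V`) to `E`, sending `[((x, φ), v)]` to
`φ v`, is well defined, bijective, and commutes with the projections to `X`. -/
theorem frame_assoc_bundle_equiv {V E X : Type*} (π : E → X)
    (hsurj : Function.Surjective π)
    (hfib : ∀ x : X, Nonempty (V ≃ {e : E // π e = x})) :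
    Function.Bijective (frameAssocMap (V := V) π) ∧
    ∀ a : Quotient (MulAction.orbitRel (Equiv.Perm V) (FrameBundle V π × V)),
      π (frameAssocMap (V := V) π a) = frameAssocProj (V := V) π a := by
  refine ⟨⟨?_, ?_⟩, ?_⟩
  · -- injective
    intro a b
    induction a using Quotient.inductionOn with
    | h a =>
    induction b using Quotient.inductionOn with
    | h b =>
    obtain ⟨⟨x, φ⟩, v⟩ := a
    obtain ⟨⟨y, ψ⟩, w⟩ := b
    intro h
    have h' : (φ v : E) = (ψ w : E) := h
    have hxy : x = y := by
      have h1 := (φ v).2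
      have h2 := (ψ w).2
      rw [← h1, ← h2, h']
    subst hxy
    have heq : φ v = ψ w := Subtype.ext h'
    apply Quotient.sound
    refine ⟨(ψ.trans φ.symm : Equiv.Perm V), ?_⟩
    have key : (((ψ.trans φ.symm : Equiv.Perm V)⁻¹ : Equiv.Perm V) : V ≃ V).trans ψ = φ := by
      ext u
      show ((ψ (ψ.symm (φ u)) : {e : E // π e = x}) : E) = ((φ u : {e : E // π e = x}) : E)
      simp
    refine Prod.ext ?_ ?_
    · exact congrArg (fun e : V ≃ {e : E // π e = x} => (⟨x, e⟩ : FrameBundle V π)) key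
    · show φ.symm (ψ w) = v
      rw [← heq]; simp
  · -- surjective
    intro e
    obtain ⟨φ⟩ := hfib (π e)
    exact ⟨Quotient.mk _ ⟨⟨π e, φ⟩, φ.symm ⟨e, rfl⟩⟩, by
      show ((φ (φ.symm ⟨e, rfl⟩) : {e' : E // π e' = π e}) : E) = e
      simp⟩
  · intro a
    induction a using Quotient.inductionOn with
    | h a => exact (a.1.2 a.2).2
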